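/- Let w ∈ W be a basic involution. Then the orbit of f_w under the coadjoint action of the diagonal torus T equals the set of all forms f_{w,ξ}: {t.f_w : t ∈ T} = {f_{w,ξ} : ξ a map Supp(w) → ℂ^×}. -/

import Mathlib

/-!
The Weyl group of type `Dₙ`, realized as the group of permutations `w` of `ℤ`
supported on `{±1, …, ±n}` with `w (-i) = - w i` and an even number of sign changes.
-/

open Equiv

/-- The simple reflections of type `Dₙ`, indexed by `i ∈ {1, …, n}`:
`sᵢ = (i, i+1)(-i, -(i+1))` for `1 ≤ i ≤ n - 1`, and
`sₙ = (n-1, -n)(-(n-1), n)`. -/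
def simpleRefl (n : ℕ) (i : ℕ) : Equiv.Perm ℤ :=
  if i < n then Equiv.swap (i : ℤ) ((i : ℤ) + 1) * Equiv.swap (-(i : ℤ)) (-((i : ℤ) + 1))
  else Equiv.swap ((n : ℤ) - 1) (-(n : ℤ)) * Equiv.swap (-((n : ℤ) - 1)) (n : ℤ)

/-- A word in the letters `{1, …, n}` (indices of simple reflections). -/
def IsWord (n : ℕ) (L : List ℕ) : Prop := ∀ i ∈ L, 1 ≤ i ∧ i ≤ n

/-- The product `s_{i₁} ⋯ s_{i_l}` of the word `L = [i₁, …, i_l]`. -/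
def wordProd (n : ℕ) (L : List ℕ) : Equiv.Perm ℤ := (L.map (simpleRefl n)).prod

/-- Membership in the Weyl group `W` of type `Dₙ`: a permutation of `ℤ` commuting with
negation, fixing every integer of absolute value `> n`, and with an even number of
`i ∈ {1, …, n}` such that `w i < 0`. -/
def IsD (n : ℕ) (w : Equiv.Perm ℤ) : Prop :=
  (∀ i : ℤ, w (-i) = -(w i)) ∧ (∀ i : ℤ, (n : ℤ) < |i| → w i = i) ∧
    Even (((Finset.Icc (1 : ℤ) (n : ℤ)).filter fun i => w i < 0).card)

/-- The length `ℓ(w)`: the minimal number of factors in an expression of `w` as a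
product of simple reflections. -/
noncomputable def weylLength (n : ℕ) (w : Equiv.Perm ℤ) : ℕ :=
  sInf {l | ∃ L : List ℕ, IsWord n L ∧ L.length = l ∧ wordProd n L = w}

/-- `L` is a reduced decomposition of `w`. -/
def IsReducedWord (n : ℕ) (w : Equiv.Perm ℤ) (L : List ℕ) : Prop :=
  IsWord n L ∧ wordProd n L = w ∧ L.length = weylLength n w

/-- `w` is a basic involution: `w ∈ W`, `w² = id`, and `w i ≠ -i` for all `i ∈ {1, …, n}`. -/
def IsBasicInvolution (n : ℕ) (w : Equiv.Perm ℤ) : Prop :=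
  IsD n w ∧ w * w = 1 ∧ ∀ i : ℤ, 1 ≤ i → i ≤ (n : ℤ) → w i ≠ -i

/-!
The group `SO₂ₙ(ℂ)`, its subgroups `B`, `U`, `T`, and the coadjoint action on `𝔫*`.
Rows and columns of `2n × 2n` matrices are indexed by `1, …, n, -n, …, -1`; the index
`i > 0` labels row `i - 1` (0-based) and the index `-j` labels row `2n - j` (0-based).
-/

/-- `2n × 2n` complex matrices. -/
abbrev Mat (n : ℕ) : Type := Matrix (Fin (2 * n)) (Fin (2 * n)) ℂ

/-- The matrix `J` with `1`'s on the antidiagonal and `0`'s elsewhere. -/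
def antidiagJ (n : ℕ) : Mat n :=
  Matrix.of fun i j => if (i : ℕ) + (j : ℕ) = 2 * n - 1 then 1 else 0

/-- The strictly lower-triangular part of a matrix. -/
def lowPart (n : ℕ) (M : Mat n) : Mat n :=
  Matrix.of fun i j => if (j : ℕ) < (i : ℕ) then M i j else 0

/-- Membership in `SO₂ₙ(ℂ) = {g ∈ SL₂ₙ(ℂ) : gᵀ J g = J}`. -/
def IsSO (n : ℕ) (g : Mat n) : Prop :=
  g.det = 1 ∧ g.transpose * antidiagJ n * g = antidiagJ n

/-- The Borel subgroup `B`: upper-triangular matrices in `SO₂ₙ(ℂ)`. -/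
def Bset (n : ℕ) : Set (Mat n) :=
  {g | IsSO n g ∧ ∀ i j : Fin (2 * n), (j : ℕ) < (i : ℕ) → g i j = 0}

/-- The unipotent radical `U`: upper-triangular matrices in `SO₂ₙ(ℂ)` with `1`'s on
the diagonal. -/
def Uset (n : ℕ) : Set (Mat n) := {g | g ∈ Bset n ∧ ∀ i, g i i = 1}

/-- The maximal torus `T`: diagonal matrices in `SO₂ₙ(ℂ)`. -/
def Tset (n : ℕ) : Set (Mat n) := {g | IsSO n g ∧ ∀ i j, i ≠ j → g i j = 0}

/-- The coadjoint action `b.λ = (b λ b⁻¹)_low`. -/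
noncomputable def coad (n : ℕ) (b lam : Mat n) : Mat n := lowPart n (b * lam * b⁻¹)

/-- The support of an involution `w`, encoded as triples: `(i, j, false)` stands for the
root `ε_{i+1} - ε_{j+1}` (so `w (i+1) = j+1`), `(i, j, true)` for `ε_{i+1} + ε_{j+1}`
(so `w (i+1) = -(j+1)`); here `i < j` as elements of `Fin n` (0-based indexing). -/
def suppFinset (n : ℕ) (w : Equiv.Perm ℤ) : Finset (Fin n × Fin n × Bool) :=
  Finset.univ.filter fun r =>
    r.1 < r.2.1 ∧
      ((r.2.2 = false ∧ w (((r.1 : ℕ) : ℤ) + 1) = ((r.2.1 : ℕ) : ℤ) + 1) ∨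
       (r.2.2 = true ∧ w (((r.1 : ℕ) : ℤ) + 1) = -(((r.2.1 : ℕ) : ℤ) + 1)))

/-- The basis vector `e_β*` of `𝔫*`: for `β = ε_i - ε_j` (1-based `i < j`),
`e_β* = E_{j,i} - E_{-i,-j}`; for `β = ε_i + ε_j`, `e_β* = E_{-j,i} - E_{-i,j}`. -/
def eStar (n : ℕ) (r : Fin n × Fin n × Bool) : Mat n :=
  if r.2.2 then
    Matrix.single ⟨2 * n - 1 - (r.2.1 : ℕ), by have := r.2.1.isLt; omega⟩
        ⟨(r.1 : ℕ), by have := r.1.isLt; omega⟩ 1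
      - Matrix.single ⟨2 * n - 1 - (r.1 : ℕ), by have := r.1.isLt; omega⟩
        ⟨(r.2.1 : ℕ), by have := r.2.1.isLt; omega⟩ 1
  else
    Matrix.single ⟨(r.2.1 : ℕ), by have := r.2.1.isLt; omega⟩
        ⟨(r.1 : ℕ), by have := r.1.isLt; omega⟩ 1
      - Matrix.single ⟨2 * n - 1 - (r.1 : ℕ), by have := r.1.isLt; omega⟩
        ⟨2 * n - 1 - (r.2.1 : ℕ), by have := r.2.1.isLt; omega⟩ 1

/-- The linear form `f_{w,ξ} = ∑_{β ∈ Supp(w)} ξ(β) e_β*`. -/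
noncomputable def fwxi (n : ℕ) (w : Equiv.Perm ℤ) (xi : Fin n × Fin n × Bool → ℂˣ) : Mat n :=
  ∑ r ∈ suppFinset n w, ((xi r : ℂ) • eStar n r)

/-- The linear form `f_w = ∑_{β ∈ Supp(w)} e_β*`. -/
noncomputable def fw (n : ℕ) (w : Equiv.Perm ℤ) : Mat n := ∑ r ∈ suppFinset n w, eStar n r

/-- The coadjoint `B`-orbit `Ω_w` of `f_w`. -/
def OmegaSet (n : ℕ) (w : Equiv.Perm ℤ) : Set (Mat n) :=
  {m | ∃ b ∈ Bset n, m = coad n b (fw n w)}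

/-- The coadjoint `U`-orbit `Θ_{w,ξ}` of `f_{w,ξ}`. -/
def ThetaSet (n : ℕ) (w : Equiv.Perm ℤ) (xi : Fin n × Fin n × Bool → ℂˣ) : Set (Mat n) :=
  {m | ∃ u ∈ Uset n, m = coad n u (fwxi n w xi)}

/-!
An element of `T` is `t = diag(t₁, …, tₙ, tₙ⁻¹, …, t₁⁻¹)`, and it rescales each `e_β*` by the
value of the root `β` at `t`, so `t.f_w = f_{w,ξ}` with `ξ(β) = β(t)`. Conversely, because `w` is
an involution commuting with `i ↦ -i`, the roots `ε_i ± ε_j` (`i < j`) of `Supp(w)` have pairwise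
distinct larger indices `j`, none of which is the smaller index of another root of `Supp(w)`.
Hence `t_i = 1` at the smaller indices and `t_j = ξ(β)^{±1}` at the larger ones realize any `ξ`.
-/

open Matrix

section DiagonalConj

variable {ι R : Type*} [Fintype ι] [DecidableEq ι] [CommRing R]

theorem diagonal_mul_single_mul_diagonal (a b : ι → R) (i j : ι) (c : R) :
    diagonal a * single i j c * diagonal b = single i j (a i * c * b j) := by
  ext k l
  simp only [mul_diagonal, diagonal_mul, single_apply]
  split_ifs with h
  · rw [h.1, h.2]
  · ring

theorem inv_diagonal_units (d : ι → Rˣ) :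
    (diagonal fun k => (d k : R))⁻¹ = diagonal fun k => (((d k)⁻¹ : Rˣ) : R) :=
  inv_eq_right_inv (by simp [diagonal_mul_diagonal])

theorem diagonal_units_conj_single (d : ι → Rˣ) (i j : ι) (c : R) :
    diagonal (fun k => (d k : R)) * single i j c * (diagonal fun k => (d k : R))⁻¹ =
      single i j (((d i / d j : Rˣ) : R) * c) := by
  rw [inv_diagonal_units, diagonal_mul_single_mul_diagonal, div_eq_mul_inv, Units.val_mul,
    mul_right_comm]

end DiagonalConj

section Indices

variable {n : ℕ}

/-- The row or column `j + 1` of `Mat n`. -/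
def posIdx (n : ℕ) (j : Fin n) : Fin (2 * n) := ⟨(j : ℕ), by have := j.isLt; omega⟩

/-- The row or column `-(j + 1)` of `Mat n`. -/
def negIdx (n : ℕ) (j : Fin n) : Fin (2 * n) := ⟨2 * n - 1 - (j : ℕ), by have := j.isLt; omega⟩

theorem eStar_eq (r : Fin n × Fin n × Bool) :
    eStar n r =
      if r.2.2 then
        single (negIdx n r.2.1) (posIdx n r.1) 1 - single (negIdx n r.1) (posIdx n r.2.1) 1
      else
        single (posIdx n r.2.1) (posIdx n r.1) 1 - single (negIdx n r.1) (negIdx n r.2.1) 1 :=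
  rfl

theorem negIdx_eq_rev (j : Fin n) : negIdx n j = (posIdx n j).rev :=
  Fin.ext (by simp only [negIdx, posIdx, Fin.val_rev]; omega)

theorem exists_eq_posIdx_or_negIdx (i : Fin (2 * n)) :
    (∃ j, i = posIdx n j) ∨ ∃ j, i = negIdx n j := by
  by_cases h : (i : ℕ) < n
  · exact Or.inl ⟨⟨i, h⟩, rfl⟩
  · exact Or.inr ⟨⟨2 * n - 1 - i, by omega⟩, Fin.ext (by simp only [negIdx]; omega)⟩

theorem antidiagJ_apply (i j : Fin (2 * n)) : antidiagJ n i j = if j = i.rev then 1 else 0 := by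
  simp only [antidiagJ, of_apply, Fin.ext_iff, Fin.val_rev]
  congr 1
  exact propext (by omega)

end Indices

section Torus

variable {n : ℕ} {G : Type*} [CommGroup G]

/-- The diagonal `(t₁, …, tₙ, tₙ⁻¹, …, t₁⁻¹)` of a torus element. -/
def torusDiag (n : ℕ) (v : Fin n → G) (i : Fin (2 * n)) : G :=
  if h : (i : ℕ) < n then v ⟨i, h⟩ else (v ⟨2 * n - 1 - i, by omega⟩)⁻¹

theorem torusDiag_posIdx (v : Fin n → G) (j : Fin n) : torusDiag n v (posIdx n j) = v j :=
  dif_pos j.isLt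

theorem torusDiag_negIdx (v : Fin n → G) (j : Fin n) :
    torusDiag n v (negIdx n j) = (v j)⁻¹ := by
  have hj := j.isLt
  rw [torusDiag, dif_neg (by simp only [negIdx]; omega)]
  congr 2
  exact Fin.ext (by simp only [negIdx]; omega)

theorem torusDiag_rev (v : Fin n → G) (i : Fin (2 * n)) :
    torusDiag n v i.rev = (torusDiag n v i)⁻¹ := by
  rcases exists_eq_posIdx_or_negIdx i with ⟨j, rfl⟩ | ⟨j, rfl⟩
  · rw [← negIdx_eq_rev, torusDiag_negIdx, torusDiag_posIdx]
  · rw [negIdx_eq_rev, Fin.rev_rev, torusDiag_posIdx, ← negIdx_eq_rev, torusDiag_negIdx, inv_inv]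

/-- The value at `diag(v₁, …, vₙ, vₙ⁻¹, …, v₁⁻¹)` of the root encoded by `r` as in `suppFinset`. -/
def rootChar (v : Fin n → G) (r : Fin n × Fin n × Bool) : G :=
  if r.2.2 then (v r.2.1 * v r.1)⁻¹ else v r.2.1 / v r.1

end Torus

section SO

variable {n : ℕ}

def torusMat (n : ℕ) (v : Fin n → ℂˣ) : Mat n := diagonal fun i => ((torusDiag n v i : ℂˣ) : ℂ)

theorem isSO_diagonal_iff (d : Fin (2 * n) → ℂ) :
    IsSO n (diagonal d) ↔ ∀ i, d i * d i.rev = 1 := by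
  have hJ : (diagonal d)ᵀ * antidiagJ n * diagonal d = antidiagJ n ↔ ∀ i, d i * d i.rev = 1 := by
    rw [diagonal_transpose, ← Matrix.ext_iff]
    simp only [mul_diagonal, diagonal_mul, antidiagJ_apply]
    refine ⟨fun h i => by simpa using h i i.rev, fun h i j => ?_⟩
    split_ifs with hj
    · rw [hj, mul_one, h]
    · simp
  refine ⟨fun h => hJ.1 h.2, fun h => ⟨?_, hJ.2 h⟩⟩
  rw [det_diagonal]
  refine Finset.prod_involution (fun i _ => i.rev) (fun i _ => h i) (fun i _ _ hi => ?_)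
    (fun i _ => Finset.mem_univ _) (fun i _ => Fin.rev_rev i)
  have := congrArg Fin.val hi
  rw [Fin.val_rev] at this
  omega

theorem mem_Tset_iff {t : Mat n} :
    t ∈ Tset n ↔ ∃ v : Fin n → ℂˣ, t = torusMat n v := by
  constructor
  · rintro ⟨hSO, hdiag⟩
    have ht : t = diagonal fun i => t i i := (IsDiag.diagonal_diag hdiag).symm
    have hpair := (isSO_diagonal_iff _).1 (ht ▸ hSO)
    refine ⟨fun j => Units.mkOfMulEqOne _ _ (hpair (posIdx n j)), ht.trans ?_⟩
    rw [torusMat]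
    congr 1
    funext i
    rcases exists_eq_posIdx_or_negIdx i with ⟨j, rfl⟩ | ⟨j, rfl⟩
    · rw [torusDiag_posIdx, Units.val_mkOfMulEqOne]
    · rw [torusDiag_negIdx, Units.val_inv_eq_inv_val, Units.val_mkOfMulEqOne, negIdx_eq_rev]
      exact eq_inv_of_mul_eq_one_right (hpair (posIdx n j))
  · rintro ⟨v, rfl⟩
    refine ⟨(isSO_diagonal_iff _).2 fun i => ?_, fun i j h => diagonal_apply_ne _ h⟩
    rw [torusDiag_rev, ← Units.val_mul, mul_inv_cancel, Units.val_one]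

end SO

section Coadjoint

variable {n : ℕ}

theorem lowPart_eq_self {M : Mat n} (hM : ∀ i j : Fin (2 * n), (i : ℕ) ≤ j → M i j = 0) :
    lowPart n M = M := by
  ext i j
  simp only [lowPart, of_apply]
  split_ifs with h
  · rfl
  · exact (hM i j (by omega)).symm

theorem eStar_apply_eq_zero {r : Fin n × Fin n × Bool} (hr : r.1 < r.2.1) {i j : Fin (2 * n)}
    (hij : (i : ℕ) ≤ j) : eStar n r i j = 0 := by
  have hr' : (r.1 : ℕ) < r.2.1 := hr
  have := r.2.1.isLt
  rw [eStar_eq]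
  split_ifs <;>
  · simp only [Matrix.sub_apply, single_apply, posIdx, negIdx, Fin.ext_iff]
    split_ifs <;> simp <;> omega

theorem torusMat_conj_eStar (v : Fin n → ℂˣ) (r : Fin n × Fin n × Bool) :
    torusMat n v * eStar n r * (torusMat n v)⁻¹ = ((rootChar v r : ℂˣ) : ℂ) • eStar n r := by
  obtain ⟨i, j, _ | _⟩ := r <;>
  · simp only [torusMat, eStar_eq, rootChar, Bool.false_eq_true, if_true, if_false,
      Matrix.mul_sub, Matrix.sub_mul, diagonal_units_conj_single, torusDiag_posIdx,
      torusDiag_negIdx, smul_sub, smul_single, smul_eq_mul]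
    congr 4
    simp [div_eq_mul_inv, mul_comm]

theorem fwxi_apply_eq_zero (w : Equiv.Perm ℤ) (xi : Fin n × Fin n × Bool → ℂˣ) {i j : Fin (2 * n)}
    (hij : (i : ℕ) ≤ j) : fwxi n w xi i j = 0 := by
  simp only [fwxi, Matrix.sum_apply, Matrix.smul_apply]
  refine Finset.sum_eq_zero fun r hr => ?_
  rw [eStar_apply_eq_zero (Finset.mem_filter.1 hr).2.1 hij, smul_zero]

theorem coad_torusMat_fw (v : Fin n → ℂˣ) (w : Equiv.Perm ℤ) :
    coad n (torusMat n v) (fw n w) = fwxi n w (rootChar v) := by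
  rw [coad, fw, Finset.mul_sum, Finset.sum_mul]
  simp only [torusMat_conj_eStar]
  exact lowPart_eq_self fun i j => fwxi_apply_eq_zero w _

theorem fwxi_congr {w : Equiv.Perm ℤ} {xi xi' : Fin n × Fin n × Bool → ℂˣ}
    (h : ∀ r ∈ suppFinset n w, xi r = xi' r) : fwxi n w xi = fwxi n w xi' :=
  Finset.sum_congr rfl fun r hr => by rw [h r hr]

end Coadjoint

section Support

variable {n : ℕ} {w : Equiv.Perm ℤ}

theorem apply_fst_of_mem_suppFinset {r : Fin n × Fin n × Bool} (hr : r ∈ suppFinset n w) :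
    w ((r.1 : ℕ) + 1) = (if r.2.2 then -1 else 1) * ((r.2.1 : ℕ) + 1) := by
  obtain ⟨-, -, ⟨hs, h⟩ | ⟨hs, h⟩⟩ := Finset.mem_filter.1 hr <;> simp [hs, h]

theorem apply_snd_of_mem_suppFinset (hodd : ∀ i, w (-i) = -w i) (hinv : Function.Involutive w)
    {r : Fin n × Fin n × Bool} (hr : r ∈ suppFinset n w) :
    w ((r.2.1 : ℕ) + 1) = (if r.2.2 then -1 else 1) * ((r.1 : ℕ) + 1) := by
  have h := congrArg w (apply_fst_of_mem_suppFinset hr)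
  rw [hinv] at h
  obtain ⟨a, c, _ | _⟩ := r
  · simpa using h.symm
  · simp only [if_true, neg_one_mul, hodd] at h ⊢
    omega

theorem eq_of_mem_suppFinset_of_snd_eq (hodd : ∀ i, w (-i) = -w i)
    (hinv : Function.Involutive w) {r r' : Fin n × Fin n × Bool} (hr : r ∈ suppFinset n w)
    (hr' : r' ∈ suppFinset n w) (h : r.2.1 = r'.2.1) : r = r' := by
  have e := (apply_snd_of_mem_suppFinset hodd hinv hr).symm.trans
    (h ▸ apply_snd_of_mem_suppFinset hodd hinv hr')
  obtain ⟨a, c, s⟩ := r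
  obtain ⟨a', c', s'⟩ := r'
  simp only at h e
  subst h
  cases s <;> cases s' <;> simp [Fin.ext_iff] at e ⊢ <;> omega

theorem snd_ne_fst_of_mem_suppFinset (hodd : ∀ i, w (-i) = -w i)
    (hinv : Function.Involutive w) {r r' : Fin n × Fin n × Bool} (hr : r ∈ suppFinset n w)
    (hr' : r' ∈ suppFinset n w) : r'.2.1 ≠ r.1 := by
  intro h
  have e := (apply_fst_of_mem_suppFinset hr).symm.trans
    (h ▸ apply_snd_of_mem_suppFinset hodd hinv hr')
  have hlt : (r.1 : ℕ) < r.2.1 := (Finset.mem_filter.1 hr).2.1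
  have hlt' : (r'.1 : ℕ) < r'.2.1 := (Finset.mem_filter.1 hr').2.1
  obtain ⟨a, c, s⟩ := r
  obtain ⟨a', c', s'⟩ := r'
  simp only at h e hlt hlt'
  subst h
  cases s <;> cases s' <;> simp at e <;> omega

theorem exists_rootChar_eq {G : Type*} [CommGroup G] (hodd : ∀ i, w (-i) = -w i)
    (hinv : Function.Involutive w) (xi : Fin n × Fin n × Bool → G) :
    ∃ v : Fin n → G, ∀ r ∈ suppFinset n w, rootChar v r = xi r := by
  let v : Fin n → G := fun j =>
    ∏ r ∈ (suppFinset n w).filter (·.2.1 = j), if r.2.2 then (xi r)⁻¹ else xi r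
  refine ⟨v, fun r hr => ?_⟩
  have hfst : v r.1 = 1 := Finset.prod_eq_one fun r' hr' =>
    absurd (Finset.mem_filter.1 hr').2 (snd_ne_fst_of_mem_suppFinset hodd hinv hr
      (Finset.mem_filter.1 hr').1)
  have hsnd : v r.2.1 = if r.2.2 then (xi r)⁻¹ else xi r :=
    Finset.prod_eq_single_of_mem r (Finset.mem_filter.2 ⟨hr, rfl⟩) fun r' hr' hne =>
      absurd (eq_of_mem_suppFinset_of_snd_eq hodd hinv (Finset.mem_filter.1 hr').1 hr
        (Finset.mem_filter.1 hr').2) hne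
  rw [rootChar, hfst, hsnd]
  cases r.2.2 <;> simp

end Support

theorem statement7_general (n : ℕ) (w : Equiv.Perm ℤ)
    (hw : IsBasicInvolution n w) :
    {m : Mat n | ∃ t ∈ Tset n, m = coad n t (fw n w)} =
      {m : Mat n | ∃ xi : Fin n × Fin n × Bool → ℂˣ, m = fwxi n w xi} := by
  obtain ⟨⟨hodd, -, -⟩, hsq, -⟩ := hw
  have hinv : Function.Involutive w := fun x => by rw [← Perm.mul_apply, hsq, Perm.one_apply]
  ext m
  constructor
  · rintro ⟨t, ht, rfl⟩
    obtain ⟨v, rfl⟩ := mem_Tset_iff.1 ht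
    exact ⟨rootChar v, coad_torusMat_fw v w⟩
  · rintro ⟨xi, rfl⟩
    obtain ⟨v, hv⟩ := exists_rootChar_eq hodd hinv xi
    exact ⟨_, mem_Tset_iff.2 ⟨v, rfl⟩, by rw [coad_torusMat_fw, fwxi_congr hv]⟩

/-- Let `w` be a basic involution in the Weyl group of type `Dₙ`,
`n ≥ 4`. Then the orbit of `f_w` under the coadjoint action of the diagonal torus `T`
is exactly the set of all the forms `f_{w,ξ}`, `ξ : Supp(w) → ℂˣ`. -/
theorem statement7 (n : ℕ) (hn : 4 ≤ n) (w : Equiv.Perm ℤ)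
    (hw : IsBasicInvolution n w) :
    {m : Mat n | ∃ t ∈ Tset n, m = coad n t (fw n w)} =
      {m : Mat n | ∃ xi : Fin n × Fin n × Bool → ℂˣ, m = fwxi n w xi} :=
  statement7_general n w hw
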